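/- arXiv:2008.08677 — 4 statements merged into one kernel-verified Lean document; each statement's English description precedes it below -/
import Mathlib

section
/- Assume F and G have closed graphs and let z̄ be feasible for problem (P). Suppose that for every λ ∈ K(z̄), the point (z̄,λ) is a local minimizer of problem (Q), and that K is inner semicompact at z̄ with respect to dom K. Then z̄ is a local minimizer of problem (P). -/
open Filter Topology

/-- Inner semicompactness of a set-valued map `Υ` at `zbar` w.r.t. `Ω`. -/
def InnerSemicompactAt {α β : Type*} [TopologicalSpace α] [TopologicalSpace β]
    (Υ : α → Set β) (Ω : Set α) (zbar : α) : Prop :=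
  ∀ z : ℕ → α, (∀ k, z k ∈ Ω) → Tendsto z atTop (𝓝 zbar) →
    ∃ φ : ℕ → ℕ, StrictMono φ ∧ ∃ w : ℕ → β,
      (∃ L, Tendsto w atTop (𝓝 L)) ∧ ∀ l, w l ∈ Υ (z (φ l))

/-- If (z̄,λ) is a local minimizer of (Q) for every λ ∈ K(z̄) and K
is inner semicompact at z̄ w.r.t. dom K, then z̄ is a local minimizer of (P). -/
theorem stmt_7 {n m s : ℕ}
    (f : EuclideanSpace ℝ (Fin n) → ℝ) (hf : Continuous f)
    (F : EuclideanSpace ℝ (Fin n) → Set (EuclideanSpace ℝ (Fin m)))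
    (G : EuclideanSpace ℝ (Fin n) × EuclideanSpace ℝ (Fin m) → Set (EuclideanSpace ℝ (Fin s)))
    (hF : IsClosed {p : EuclideanSpace ℝ (Fin n) × EuclideanSpace ℝ (Fin m) | p.2 ∈ F p.1})
    (hG : IsClosed {p : (EuclideanSpace ℝ (Fin n) × EuclideanSpace ℝ (Fin m)) ×
      EuclideanSpace ℝ (Fin s) | p.2 ∈ G p.1})
    (M : Set (EuclideanSpace ℝ (Fin n))) (hM : IsClosed M)
    (K : EuclideanSpace ℝ (Fin n) → Set (EuclideanSpace ℝ (Fin m)))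
    (hK : ∀ z, K z = {lam | lam ∈ F z ∧ 0 ∈ G (z, lam)})
    (Z : Set (EuclideanSpace ℝ (Fin n)))
    (hZ : Z = {z | z ∈ M ∧ (K z).Nonempty})
    (Ztilde : Set (EuclideanSpace ℝ (Fin n) × EuclideanSpace ℝ (Fin m)))
    (hZt : Ztilde = {p | p.1 ∈ M ∧ p.2 ∈ F p.1 ∧ 0 ∈ G p})
    (zbar : EuclideanSpace ℝ (Fin n))
    (hfeas : zbar ∈ Z)
    (hmin : ∀ lam ∈ K zbar,
      IsLocalMinOn (fun p : EuclideanSpace ℝ (Fin n) × EuclideanSpace ℝ (Fin m) => f p.1)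
        Ztilde (zbar, lam))
    (hisc : InnerSemicompactAt K {z | (K z).Nonempty} zbar) :
    IsLocalMinOn f Z zbar := by
  by_contra h
  rw [IsLocalMinOn, IsMinFilter, Filter.not_eventually] at h
  simp only [not_le] at h
  obtain ⟨z0, hz0, hlt0⟩ := Filter.exists_seq_forall_of_frequently h
  rw [tendsto_nhdsWithin_iff] at hz0
  obtain ⟨N, hN⟩ := hz0.2.exists_forall_of_atTop
  set z : ℕ → EuclideanSpace ℝ (Fin n) := fun k => z0 (k + N) with hzdef
  have hzZ : ∀ k, z k ∈ Z := fun k => hN (k + N) (Nat.le_add_left N k)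
  have hztend : Tendsto z atTop (𝓝 zbar) := hz0.1.comp (tendsto_add_atTop_nat N)
  have hzlt : ∀ k, f (z k) < f zbar := fun k => hlt0 (k + N)
  have hzdom : ∀ k, z k ∈ {z | (K z).Nonempty} := by
    intro k; have := hzZ k; rw [hZ] at this; exact this.2
  obtain ⟨φ, hφ, w, ⟨L, hwL⟩, hwK⟩ := hisc z hzdom hztend
  have hztendφ : Tendsto (fun l => z (φ l)) atTop (𝓝 zbar) :=
    hztend.comp (hφ.tendsto_atTop)
  have hptend : Tendsto (fun l => (z (φ l), w l)) atTop (𝓝 (zbar, L)) :=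
    hztendφ.prodMk_nhds hwL
  have hwF : ∀ l, w l ∈ F (z (φ l)) := fun l => ((hK _ ▸ hwK l) : _ ∧ _).1
  have hwG : ∀ l, (0 : EuclideanSpace ℝ (Fin s)) ∈ G (z (φ l), w l) :=
    fun l => ((hK _ ▸ hwK l) : _ ∧ _).2
  have hLF : L ∈ F zbar :=
    hF.mem_of_tendsto hptend (Filter.Eventually.of_forall hwF)
  have hLG : (0 : EuclideanSpace ℝ (Fin s)) ∈ G (zbar, L) := by
    have : ((zbar, L), (0 : EuclideanSpace ℝ (Fin s))) ∈
        {p : (EuclideanSpace ℝ (Fin n) × EuclideanSpace ℝ (Fin m)) ×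
          EuclideanSpace ℝ (Fin s) | p.2 ∈ G p.1} :=
      hG.mem_of_tendsto (hptend.prodMk_nhds tendsto_const_nhds)
        (Filter.Eventually.of_forall hwG)
    exact this
  have hLK : L ∈ K zbar := by rw [hK]; exact ⟨hLF, hLG⟩
  have hMz : ∀ k, z k ∈ M := by intro k; have := hzZ k; rw [hZ] at this; exact this.1
  have hZtmem : ∀ l, (z (φ l), w l) ∈ Ztilde := by
    intro l; rw [hZt]; exact ⟨hMz _, hwF l, hwG l⟩
  have hptendW : Tendsto (fun l => (z (φ l), w l)) atTop (𝓝[Ztilde] (zbar, L)) :=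
    tendsto_nhdsWithin_iff.mpr ⟨hptend, Filter.Eventually.of_forall hZtmem⟩
  have hev : ∀ᶠ l in atTop, f zbar ≤ f (z (φ l)) :=
    hptendW.eventually (hmin L hLK)
  obtain ⟨l, hl⟩ := hev.exists
  exact absurd (hzlt (φ l)) (not_lt.mpr hl)
end

section
/- Assume F and G have closed graphs. Let (z̄,λ̄) be a local minimizer of problem (Q) and suppose K is inner semicontinuous at (z̄,λ̄) with respect to dom K, i.e., for every sequence {z_k} ⊂ dom K with z_k → z̄ there is a sequence λ_k → λ̄ with λ_k ∈ K(z_k) for all sufficiently large k. Then z̄ is a local minimizer of problem (P). -/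
open Filter Topology

/-- If (z̄,λ̄) is a local minimizer of (Q) and K is inner semicontinuous
at (z̄,λ̄) w.r.t. dom K, then z̄ is a local minimizer of (P). -/
theorem stmt_8 {n m s : ℕ}
    (f : EuclideanSpace ℝ (Fin n) → ℝ)
    (F : EuclideanSpace ℝ (Fin n) → Set (EuclideanSpace ℝ (Fin m)))
    (G : EuclideanSpace ℝ (Fin n) × EuclideanSpace ℝ (Fin m) → Set (EuclideanSpace ℝ (Fin s)))
    (hF : IsClosed {p : EuclideanSpace ℝ (Fin n) × EuclideanSpace ℝ (Fin m) | p.2 ∈ F p.1})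
    (hG : IsClosed {p : (EuclideanSpace ℝ (Fin n) × EuclideanSpace ℝ (Fin m)) ×
      EuclideanSpace ℝ (Fin s) | p.2 ∈ G p.1})
    (M : Set (EuclideanSpace ℝ (Fin n))) (hM : IsClosed M)
    (K : EuclideanSpace ℝ (Fin n) → Set (EuclideanSpace ℝ (Fin m)))
    (hK : ∀ z, K z = {lam | lam ∈ F z ∧ 0 ∈ G (z, lam)})
    (Z : Set (EuclideanSpace ℝ (Fin n)))
    (hZ : Z = {z | z ∈ M ∧ (K z).Nonempty})
    (Ztilde : Set (EuclideanSpace ℝ (Fin n) × EuclideanSpace ℝ (Fin m)))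
    (hZt : Ztilde = {p | p.1 ∈ M ∧ p.2 ∈ F p.1 ∧ 0 ∈ G p})
    (zbar : EuclideanSpace ℝ (Fin n)) (lambar : EuclideanSpace ℝ (Fin m))
    (hfeas : (zbar, lambar) ∈ Ztilde)
    (hmin : IsLocalMinOn (fun p : EuclideanSpace ℝ (Fin n) × EuclideanSpace ℝ (Fin m) => f p.1)
      Ztilde (zbar, lambar))
    (hisc : ∀ z : ℕ → EuclideanSpace ℝ (Fin n), (∀ k, (K (z k)).Nonempty) →
      Tendsto z atTop (𝓝 zbar) →
      ∃ lam : ℕ → EuclideanSpace ℝ (Fin m), Tendsto lam atTop (𝓝 lambar) ∧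
        ∀ᶠ k in atTop, lam k ∈ K (z k)) :
    IsLocalMinOn f Z zbar := by

  by_contra hnot
  have hfreq : ∃ᶠ x in 𝓝[Z] zbar, f x < f zbar := by
    rw [IsLocalMinOn, IsMinFilter] at hnot
    simpa [not_le] using (Filter.not_eventually.mp hnot)
  have hfreq2 : ∃ᶠ x in 𝓝[Z] zbar, f x < f zbar ∧ x ∈ Z :=
    hfreq.and_eventually self_mem_nhdsWithin
  obtain ⟨z, hz_tendsto, hz⟩ := Filter.exists_seq_forall_of_frequently hfreq2
  have hzZ : ∀ k, z k ∈ Z := fun k => (hz k).2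
  have hne : ∀ k, (K (z k)).Nonempty := fun k => by
    have := hzZ k; rw [hZ] at this; exact this.2
  have hzM : ∀ k, z k ∈ M := fun k => by
    have := hzZ k; rw [hZ] at this; exact this.1
  have hz_nhds : Tendsto z atTop (𝓝 zbar) :=
    hz_tendsto.mono_right nhdsWithin_le_nhds
  obtain ⟨lam, hlam_tendsto, hlam_mem⟩ := hisc z hne hz_nhds
  have hpair : Tendsto (fun k => (z k, lam k)) atTop (𝓝[Ztilde] (zbar, lambar)) := by
    apply tendsto_nhdsWithin_of_tendsto_nhds_of_eventually_within
    · exact hz_nhds.prodMk_nhds hlam_tendsto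
    · filter_upwards [hlam_mem] with k hk
      rw [hK] at hk
      rw [hZt]
      exact ⟨hzM k, hk.1, hk.2⟩
  have := (hpair.eventually hmin)
  rcases this.exists with ⟨k, hk⟩
  exact absurd hk (not_le.mpr (hz k).1)
end

section
/- Assume f : ℝⁿ → ℝ is convex, F and G are convex set-valued mappings, and M ⊂ ℝⁿ is convex. Let z̄ be feasible for problem (P) and suppose there exist λ̄ ∈ K(z̄), μ ∈ ℝᵐ, ν ∈ ℝˢ, and vectors ξ₁ ∈ ∂f(z̄) (convex subdifferential), ξ₂ with (ξ₂, −μ) ∈ N_{gph F}(z̄, λ̄), (ξ₃, μ, −ν) ∈ N_{gph G}((z̄, λ̄), 0), and ξ₄ ∈ N_M(z̄) (normal cones in the sense of convex analysis), such that 0 = ξ₁ + ξ₂ + ξ₃ + ξ₄. Then z̄ is a global minimizer of problem (P). -/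
open scoped RealInnerProductSpace

/-- In the convex case, the explicit M-stationarity conditions are
sufficient for global optimality in problem (P). -/
theorem stmt_13 {n m s : ℕ}
    (f : EuclideanSpace ℝ (Fin n) → ℝ) (hf : ConvexOn ℝ Set.univ f)
    (F : EuclideanSpace ℝ (Fin n) → Set (EuclideanSpace ℝ (Fin m)))
    (G : EuclideanSpace ℝ (Fin n) × EuclideanSpace ℝ (Fin m) → Set (EuclideanSpace ℝ (Fin s)))
    (hF : Convex ℝ {p : EuclideanSpace ℝ (Fin n) × EuclideanSpace ℝ (Fin m) | p.2 ∈ F p.1})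
    (hG : Convex ℝ {p : (EuclideanSpace ℝ (Fin n) × EuclideanSpace ℝ (Fin m)) ×
      EuclideanSpace ℝ (Fin s) | p.2 ∈ G p.1})
    (M : Set (EuclideanSpace ℝ (Fin n))) (hM : Convex ℝ M)
    (Z : Set (EuclideanSpace ℝ (Fin n)))
    (hZ : Z = {z | z ∈ M ∧ ∃ lam ∈ F z, 0 ∈ G (z, lam)})
    (zbar : EuclideanSpace ℝ (Fin n)) (hfeas : zbar ∈ Z)
    (lambar : EuclideanSpace ℝ (Fin m))
    (hlam : lambar ∈ F zbar ∧ 0 ∈ G (zbar, lambar))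
    (μ : EuclideanSpace ℝ (Fin m)) (ν : EuclideanSpace ℝ (Fin s))
    (ξ₁ ξ₂ ξ₃ ξ₄ : EuclideanSpace ℝ (Fin n))
    -- ξ₁ ∈ ∂f(z̄) (convex subdifferential)
    (h₁ : ∀ z, f zbar + ⟪ξ₁, z - zbar⟫ ≤ f z)
    -- (ξ₂, −μ) ∈ N_{gph F}(z̄, λ̄)
    (h₂ : ∀ z lam, lam ∈ F z → ⟪ξ₂, z - zbar⟫ + ⟪-μ, lam - lambar⟫ ≤ 0)
    -- (ξ₃, μ, −ν) ∈ N_{gph G}((z̄, λ̄), 0)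
    (h₃ : ∀ z lam w, w ∈ G (z, lam) →
      ⟪ξ₃, z - zbar⟫ + ⟪μ, lam - lambar⟫ + ⟪-ν, w - 0⟫ ≤ 0)
    -- ξ₄ ∈ N_M(z̄)
    (h₄ : ∀ z ∈ M, ⟪ξ₄, z - zbar⟫ ≤ 0)
    (hsum : (0 : EuclideanSpace ℝ (Fin n)) = ξ₁ + ξ₂ + ξ₃ + ξ₄) :
    ∀ z ∈ Z, f zbar ≤ f z := by
  intro z hz
  rw [hZ] at hz
  obtain ⟨hzM, lam, hlamF, hlamG⟩ := hz
  have e2 := h₂ z lam hlamF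
  have e3 := h₃ z lam 0 hlamG
  have e4 := h₄ z hzM
  have e1 := h₁ z
  have hx : ξ₁ = -(ξ₂ + ξ₃ + ξ₄) := by
    have := hsum
    apply eq_neg_of_add_eq_zero_left
    rw [this]; abel
  have key : ⟪ξ₁, z - zbar⟫ ≥ 0 := by
    rw [hx]
    simp only [inner_neg_left, inner_add_left, inner_neg_left, sub_zero,
      inner_zero_right] at *
    linarith
  linarith
end

section
/- For z ∈ ℝⁿ and an integer κ with 1 ≤ κ ≤ n−1: ‖z‖₀ ≤ κ if and only if there exists λ ∈ ℝⁿ with Σᵢ λᵢ ≥ n − κ and (zᵢ, λᵢ) ∈ 𝒞 for all i ∈ {1,…,n}, where 𝒞 := {(a,b) ∈ ℝ² | ab = 0, b ∈ [0,1]}. -/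
/-- ‖z‖₀ ≤ κ iff there exists λ ∈ ℝⁿ with Σᵢ λᵢ ≥ n − κ and
(zᵢ, λᵢ) ∈ 𝒞 = {(a,b) | ab = 0, b ∈ [0,1]} for all i. -/
theorem stmt_15 {n : ℕ} (κ : ℕ) (hκ₁ : 1 ≤ κ) (hκ₂ : κ + 1 ≤ n)
    (z : EuclideanSpace ℝ (Fin n)) :
    {i | z i ≠ 0}.ncard ≤ κ ↔
      ∃ lam : Fin n → ℝ, ((n : ℝ) - κ ≤ ∑ i, lam i) ∧
        ∀ i, z i * lam i = 0 ∧ 0 ≤ lam i ∧ lam i ≤ 1 := by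
  classical
  have hset : {i | z i ≠ 0}.ncard = (Finset.univ.filter (fun i => z i ≠ 0)).card := by
    rw [Set.ncard_eq_toFinset_card']
    congr 1
    ext i
    simp
  have hcompl : (Finset.univ.filter (fun i => z i = 0)).card
      = n - (Finset.univ.filter (fun i => z i ≠ 0)).card := by
    have := Finset.card_filter_add_card_filter_not
      (s := (Finset.univ : Finset (Fin n))) (p := fun i => z i = 0)
    simp only [Finset.card_univ, Fintype.card_fin, ne_eq] at this ⊢
    omega
  constructor
  · intro h
    refine ⟨fun i => if z i = 0 then 1 else 0, ?_, ?_⟩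
    · have hsum : ∑ i, (if z i = 0 then (1:ℝ) else 0)
          = (Finset.univ.filter (fun i => z i = 0)).card := by
        simp [Finset.sum_boole]
      rw [hsum, hcompl]
      rw [hset] at h
      have hle : (Finset.univ.filter (fun i => z i ≠ 0)).card ≤ n := by
        calc _ ≤ (Finset.univ : Finset (Fin n)).card := Finset.card_filter_le _ _
        _ = n := by simp
      have : (n : ℝ) - κ ≤ (n : ℝ) - (Finset.univ.filter (fun i => z i ≠ 0)).card := by
        have : ((Finset.univ.filter (fun i => z i ≠ 0)).card : ℝ) ≤ κ := by exact_mod_cast h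
        linarith
      calc (n:ℝ) - κ ≤ _ := this
        _ = ((n - (Finset.univ.filter (fun i => z i ≠ 0)).card : ℕ) : ℝ) := by
            rw [Nat.cast_sub hle]
    · intro i
      by_cases hz : z i = 0 <;> simp [hz]
  · rintro ⟨lam, hsum, hlam⟩
    rw [hset]
    by_contra hcon
    push_neg at hcon
    have hbound : ∑ i, lam i ≤ (Finset.univ.filter (fun i => z i = 0)).card := by
      have : ∑ i, lam i ≤ ∑ i, (if z i = 0 then (1:ℝ) else 0) := by
        apply Finset.sum_le_sum
        intro i _
        by_cases hz : z i = 0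
        · simp [hz, (hlam i).2.2]
        · have : lam i = 0 := by
            have := (hlam i).1
            rcases mul_eq_zero.mp this with h | h
            · exact absurd h hz
            · exact h
          simp [hz, this]
      calc ∑ i, lam i ≤ _ := this
        _ = _ := by simp [Finset.sum_boole]
    rw [hcompl] at hbound
    have hle : (Finset.univ.filter (fun i => z i ≠ 0)).card ≤ n := by
      calc _ ≤ (Finset.univ : Finset (Fin n)).card := Finset.card_filter_le _ _
      _ = n := by simp
    rw [Nat.cast_sub hle] at hbound
    have : (κ : ℝ) < (Finset.univ.filter (fun i => z i ≠ 0)).card := by exact_mod_cast hcon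
    linarith
end
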